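/- arXiv:1805.01474 — 3 statements merged into one kernel-verified Lean document; each statement's English description precedes it below -/
import Mathlib

section
/- The symmetric energy barrier is a phase invariant: if H_A and H_B are commuting Pauli (stabilizer) Hamiltonians with symmetry S(g) such that H_B = U(H_A + H_anc)U† for a constant-depth local unitary U commuting with S(g), where H_anc is a sum of non-interacting single-site projector terms on ancilla qubits in a symmetric state, then H_A and H_B have the same symmetric energy barrier: every symmetric local decomposition {l^(k)} of a logical operator of H_A yields the symmetric local decomposition {U l^(k) U†} of a logical operator of H_B with identical intermediate energies, and conversely. -/
/-!
Energies, logical operators and symmetric local decompositions are all expressed through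
products of Pauli operators and the commutation form `omega`. A Clifford automorphism preserves
both and fixes the symmetry operators, so conjugation by `U` transports each of these notions
from `H_A + H_anc` to `H_B` (relabelled along `eqv`). Locality only degrades from `r` to `r + c`,
which the barrier does not see since it minimises over all ranges; the same argument for `U⁻¹`
gives the reverse inclusion of achievable barriers.
-/

/-- A Pauli operator (modulo phase) on qubits indexed by `Q`, given by the
supports of its `X` and `Z` parts. -/
structure Pauli (Q : Type*) [DecidableEq Q] where
  X : Finset Q
  Z : Finset Q

namespace Pauli

variable {Q : Type*} [DecidableEq Q]

instance : One (Pauli Q) := ⟨⟨∅, ∅⟩⟩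
instance : Mul (Pauli Q) := ⟨fun P R => ⟨symmDiff P.X R.X, symmDiff P.Z R.Z⟩⟩

theorem mul_def (P R : Pauli Q) : P * R = ⟨symmDiff P.X R.X, symmDiff P.Z R.Z⟩ := rfl
theorem one_def : (1 : Pauli Q) = ⟨∅, ∅⟩ := rfl

/-- Pauli operators modulo phase form a commutative monoid (in fact an
elementary abelian 2-group). -/
instance : CommMonoid (Pauli Q) where
  mul_assoc a b c := by simp [mul_def, symmDiff_assoc]
  one_mul a := by cases a; simp [mul_def, one_def, ← Finset.bot_eq_empty]
  mul_one a := by cases a; simp [mul_def, one_def, ← Finset.bot_eq_empty]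
  mul_comm a b := by simp [mul_def, symmDiff_comm]

/-- Pauli X on a single qubit. -/
def Xop (q : Q) : Pauli Q := ⟨{q}, ∅⟩
/-- Pauli Z on a single qubit. -/
def Zop (q : Q) : Pauli Q := ⟨∅, {q}⟩
/-- The product of Pauli X over a finite set of qubits. -/
def XOn (S : Finset Q) : Pauli Q := ⟨S, ∅⟩
/-- The product of Pauli Z over a finite set of qubits. -/
def ZOn (S : Finset Q) : Pauli Q := ⟨∅, S⟩
/-- The support of a Pauli operator. -/
def supp (P : Pauli Q) : Finset Q := P.X ∪ P.Z

/-- The symplectic form: `omega P R = 0` iff the two Pauli operators commute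
(as actual operators, for any choice of phases), and `omega P R = 1` iff they
anticommute. -/
def omega (P R : Pauli Q) : ZMod 2 :=
  ((P.X ∩ R.Z).card : ZMod 2) + ((R.X ∩ P.Z).card : ZMod 2)

end Pauli

namespace Pauli

variable {Q : Type*} [DecidableEq Q] [Fintype Q]

/-- A Clifford automorphism of the Pauli group: the conjugation action
`P ↦ U P U†` of a Clifford unitary, a bijection preserving products and the
commutation form. -/
structure CliffordAut (Q : Type*) [DecidableEq Q] where
  toEquiv : Pauli Q ≃ Pauli Q
  map_mul : ∀ P R : Pauli Q, toEquiv (P * R) = toEquiv P * toEquiv R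
  map_omega : ∀ P R : Pauli Q, omega (toEquiv P) (toEquiv R) = omega P R

variable (dist : Q → Q → ℕ)

/-- A Pauli operator is `r`-local when its support has diameter at most `r`
for the distance `dist`. -/
def IsLocal (r : ℕ) (P : Pauli Q) : Prop :=
  ∀ q ∈ P.supp, ∀ q' ∈ P.supp, dist q q' ≤ r

variable {S : Type*} (sym : S → Pauli Q)

/-- A Pauli operator is symmetric when it commutes with every symmetry
operator `S(g)`. -/
def Symm (P : Pauli Q) : Prop := ∀ s : S, omega P (sym s) = 0

/-- A symmetric local decomposition of a Pauli operator `l̄`: a sequence of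
Pauli operators starting at the identity and ending at `l̄`, each commuting
with all the symmetry operators, with consecutive operators differing only by
an `r`-local operator. -/
def IsSymLocalDecomp (r : ℕ) (lbar : Pauli Q) (L : List (Pauli Q)) : Prop :=
  L ≠ [] ∧ L.head? = some 1 ∧ L.getLast? = some lbar ∧
    (∀ P ∈ L, Symm sym P) ∧ L.Chain' fun P P' => IsLocal dist r (P * P')

variable {T : Type*} [Fintype T]

/-- The energy of the state `P|ψ₀⟩` above the ground energy, for the
stabilizer Hamiltonian `H = -Σ_t term t`: twice the number of terms flipped
by `P`. -/
def energyOf (term : T → Pauli Q) (P : Pauli Q) : ℕ :=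
  2 * (Finset.univ.filter fun t : T => omega (term t) P = 1).card

/-- The maximal intermediate energy along a decomposition. -/
def maxEnergyOf (term : T → Pauli Q) (L : List (Pauli Q)) : ℕ :=
  (L.map (energyOf term)).foldr max 0

/-- A (nontrivial) Pauli logical operator of the stabilizer Hamiltonian
`H = -Σ_t term t`: it commutes with every term but is not a product of
terms. -/
def IsLogicalOf (term : T → Pauli Q) (P : Pauli Q) : Prop :=
  (∀ t : T, omega (term t) P = 0) ∧ P ∉ Submonoid.closure (Set.range term)

/-- The symmetric energy barrier of the stabilizer Hamiltonian
`H = -Σ_t term t`: the least barrier of any symmetric local decomposition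
(of any constant range `r`) of any logical operator. -/
noncomputable def symBarrierOf (term : T → Pauli Q) : ℕ :=
  sInf {B : ℕ | ∃ (r : ℕ) (lbar : Pauli Q) (L : List (Pauli Q)),
    IsLogicalOf term lbar ∧ IsSymLocalDecomp dist sym r lbar L ∧
    B = maxEnergyOf term L}

end Pauli

namespace Pauli

variable {Q : Type*} [DecidableEq Q]

namespace CliffordAut

variable (U : CliffordAut Q)

def toMulEquiv : Pauli Q ≃* Pauli Q := { U.toEquiv with map_mul' := U.map_mul }

theorem map_one : U.toEquiv 1 = 1 := U.toMulEquiv.map_one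

def symm : CliffordAut Q where
  toEquiv := U.toEquiv.symm
  map_mul := U.toMulEquiv.symm.map_mul
  map_omega P R := by
    rw [← U.map_omega, Equiv.apply_symm_apply, Equiv.apply_symm_apply]

theorem symm_apply_eq_self {P : Pauli Q} (h : U.toEquiv P = P) : U.symm.toEquiv P = P :=
  U.toEquiv.symm_apply_eq.2 h.symm

theorem symm_comp_comp {T : Type*} (term : T → Pauli Q) :
    U.symm.toEquiv ∘ U.toEquiv ∘ term = term := by
  ext1 t; exact U.toEquiv.symm_apply_apply (term t)

end CliffordAut

section Energy

variable {T T' : Type*} [Fintype T] [Fintype T']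

theorem energyOf_comp_equiv (term : T → Pauli Q) (e : T' ≃ T) :
    energyOf (term ∘ e) = energyOf term := by
  ext1 P
  simp only [energyOf, Function.comp_apply]
  congr 1
  exact Finset.card_equiv e (by simp)

theorem energyOf_map (U : CliffordAut Q) (term : T → Pauli Q) (P : Pauli Q) :
    energyOf (U.toEquiv ∘ term) (U.toEquiv P) = energyOf term P := by
  simp only [energyOf, Function.comp_apply, U.map_omega]

theorem maxEnergyOf_map {term : T → Pauli Q} {term' : T' → Pauli Q}
    {f : Pauli Q → Pauli Q} (h : ∀ P, energyOf term' (f P) = energyOf term P)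
    (L : List (Pauli Q)) : maxEnergyOf term' (L.map f) = maxEnergyOf term L := by
  simp only [maxEnergyOf, List.map_map, Function.comp_def, h]

end Energy

theorem isLogicalOf_comp_equiv {T T' : Type*} (term : T → Pauli Q) (e : T' ≃ T) (P : Pauli Q) :
    IsLogicalOf (term ∘ e) P ↔ IsLogicalOf term P := by
  simp only [IsLogicalOf, EquivLike.range_comp, Function.comp_apply]
  rw [e.forall_congr_right (q := fun t => omega (term t) P = 0)]

theorem isLogicalOf_map {T : Type*} (U : CliffordAut Q) (term : T → Pauli Q) (P : Pauli Q) :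
    IsLogicalOf (U.toEquiv ∘ term) (U.toEquiv P) ↔ IsLogicalOf term P := by
  have hclosure : Submonoid.closure (Set.range (U.toEquiv ∘ term))
      = (Submonoid.closure (Set.range term)).map U.toMulEquiv := by
    rw [MonoidHom.map_mclosure, Set.range_comp]
    rfl
  simp only [IsLogicalOf, Function.comp_apply, U.map_omega, hclosure]
  rw [show U.toEquiv P = U.toMulEquiv P from rfl,
    Submonoid.mem_map_iff_mem U.toMulEquiv.injective]

section Decomposition

variable (dist : Q → Q → ℕ) {S : Type*} (sym : S → Pauli Q)

theorem Symm.map {U : CliffordAut Q} (hsym : ∀ s, U.toEquiv (sym s) = sym s) {P : Pauli Q}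
    (hP : Symm sym P) : Symm sym (U.toEquiv P) := fun s => by
  rw [← hsym s, U.map_omega]
  exact hP s

theorem IsSymLocalDecomp.map {U : CliffordAut Q} {r r' : ℕ}
    (hloc : ∀ P, IsLocal dist r P → IsLocal dist r' (U.toEquiv P))
    (hsym : ∀ s, U.toEquiv (sym s) = sym s) {lbar : Pauli Q} {L : List (Pauli Q)}
    (hL : IsSymLocalDecomp dist sym r lbar L) :
    IsSymLocalDecomp dist sym r' (U.toEquiv lbar) (L.map U.toEquiv) := by
  obtain ⟨hne, hhead, hlast, hsymL, hchain⟩ := hL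
  refine ⟨by simpa using hne, ?_, ?_, ?_, ?_⟩
  · rw [List.head?_map, hhead, Option.map_some, U.map_one]
  · rw [List.getLast?_map, hlast, Option.map_some]
  · simp only [List.mem_map, forall_exists_index, and_imp, forall_apply_eq_imp_iff₂]
    exact fun P hP => (hsymL P hP).map sym hsym
  · rw [List.Chain', List.isChain_map]
    exact hchain.imp fun P P' h => U.map_mul P P' ▸ hloc _ h

end Decomposition

section Barrier

variable (dist : Q → Q → ℕ) {S : Type*} (sym : S → Pauli Q) {T : Type*} [Fintype T]

def symBarriers (term : T → Pauli Q) : Set ℕ :=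
  {B : ℕ | ∃ (r : ℕ) (lbar : Pauli Q) (L : List (Pauli Q)),
    IsLogicalOf term lbar ∧ IsSymLocalDecomp dist sym r lbar L ∧ B = maxEnergyOf term L}

theorem symBarrierOf_eq_sInf_symBarriers (term : T → Pauli Q) :
    symBarrierOf dist sym term = sInf (symBarriers dist sym term) := rfl

theorem symBarriers_comp_equiv {T' : Type*} [Fintype T'] (term : T → Pauli Q) (e : T' ≃ T) :
    symBarriers dist sym (term ∘ e) = symBarriers dist sym term := by
  simp only [symBarriers, maxEnergyOf, energyOf_comp_equiv, isLogicalOf_comp_equiv]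

theorem symBarriers_subset_map {U : CliffordAut Q} {c : ℕ}
    (hloc : ∀ r P, IsLocal dist r P → IsLocal dist (r + c) (U.toEquiv P))
    (hsym : ∀ s, U.toEquiv (sym s) = sym s) (term : T → Pauli Q) :
    symBarriers dist sym term ⊆ symBarriers dist sym (U.toEquiv ∘ term) := by
  rintro _ ⟨r, lbar, L, hlogical, hdecomp, rfl⟩
  exact ⟨r + c, U.toEquiv lbar, L.map U.toEquiv, (isLogicalOf_map U term lbar).2 hlogical,
    hdecomp.map dist sym (hloc r) hsym, (maxEnergyOf_map (energyOf_map U term) L).symm⟩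

theorem symBarriers_map {U : CliffordAut Q} {c : ℕ}
    (hloc : ∀ r P, IsLocal dist r P → IsLocal dist (r + c) (U.toEquiv P))
    (hlocSymm : ∀ r P, IsLocal dist r P → IsLocal dist (r + c) (U.toEquiv.symm P))
    (hsym : ∀ s, U.toEquiv (sym s) = sym s) (term : T → Pauli Q) :
    symBarriers dist sym (U.toEquiv ∘ term) = symBarriers dist sym term := by
  refine subset_antisymm ?_ (symBarriers_subset_map dist sym hloc hsym term)
  simpa only [U.symm_comp_comp] using symBarriers_subset_map dist sym (U := U.symm) hlocSymm
    (fun s => U.symm_apply_eq_self (hsym s)) (U.toEquiv ∘ term)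

end Barrier

end Pauli

open Pauli

theorem symmetric_energy_barrier_is_phase_invariant_general
    {Q : Type*} [DecidableEq Q] (dist : Q → Q → ℕ)
    {S : Type*} (sym : S → Pauli Q)
    -- the terms of the stabilizer Hamiltonian `H_A` (mutually commuting):
    {TA : Type*} [Fintype TA] (termA : TA → Pauli Q)
    -- the ancilla qubits, their single-site terms, and disjointness from `H_A`:
    {Anc : Type*} [Fintype Anc] (ancQ : Anc → Q)
    -- the terms of the stabilizer Hamiltonian `H_B`:
    {TB : Type*} [Fintype TB] (termB : TB → Pauli Q)
    -- the constant-depth local Clifford unitary `U`, commuting with the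
    -- symmetry, with depth constant `c`:
    (U : CliffordAut Q) (c : ℕ)
    (hUloc : ∀ (r : ℕ) (P : Pauli Q), IsLocal dist r P → IsLocal dist (r + c) (U.toEquiv P))
    (hUlocInv : ∀ (r : ℕ) (P : Pauli Q), IsLocal dist r P → IsLocal dist (r + c) (U.toEquiv.symm P))
    (hUsym : ∀ s : S, U.toEquiv (sym s) = sym s)
    -- `H_B = U (H_A + H_anc) U†`:
    (eqv : TB ≃ TA ⊕ Anc)
    (hB : ∀ t : TB, termB t =
      U.toEquiv (Sum.elim termA (fun a => Pauli.Zop (ancQ a)) (eqv t))) :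
    -- conjugation preserves energies, logical operators and symmetric local
    -- decompositions (in both directions) ...
    (∀ P : Pauli Q,
      energyOf termB (U.toEquiv P)
        = energyOf (Sum.elim termA fun a => Pauli.Zop (ancQ a)) P) ∧
    (∀ lbar : Pauli Q,
      IsLogicalOf (Sum.elim termA fun a => Pauli.Zop (ancQ a)) lbar ↔
        IsLogicalOf termB (U.toEquiv lbar)) ∧
    (∀ (r : ℕ) (lbar : Pauli Q) (L : List (Pauli Q)),
      IsSymLocalDecomp dist sym r lbar L →
        IsSymLocalDecomp dist sym (r + c) (U.toEquiv lbar) (L.map U.toEquiv)) ∧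
    (∀ (r : ℕ) (lbar : Pauli Q) (L : List (Pauli Q)),
      IsSymLocalDecomp dist sym r lbar L →
        IsSymLocalDecomp dist sym (r + c) (U.toEquiv.symm lbar) (L.map U.toEquiv.symm)) ∧
    -- ... hence `H_A` (with its decoupled ancillas) and `H_B` have the same
    -- symmetric energy barrier:
    symBarrierOf dist sym (Sum.elim termA fun a => Pauli.Zop (ancQ a))
      = symBarrierOf dist sym termB := by
  obtain rfl : termB = (U.toEquiv ∘ Sum.elim termA fun a => Zop (ancQ a)) ∘ eqv := funext hB
  refine ⟨fun P => ?_, fun lbar => ?_, fun r lbar L hL => hL.map dist sym (hUloc r) hUsym,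
    fun r lbar L hL => hL.map dist sym (U := U.symm) (hUlocInv r)
      (fun s => U.symm_apply_eq_self (hUsym s)), ?_⟩
  · rw [energyOf_comp_equiv, energyOf_map]
  · rw [isLogicalOf_comp_equiv, isLogicalOf_map]
  · rw [symBarrierOf_eq_sInf_symBarriers, symBarrierOf_eq_sInf_symBarriers,
      symBarriers_comp_equiv, symBarriers_map dist sym hUloc hUlocInv hUsym]

/-- If `H_B = U (H_A + H_anc) U†` for a constant-depth local
Clifford unitary `U` commuting with the symmetry, where `H_anc` consists of
non-interacting single-site terms on ancilla qubits (disjoint from the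
support of `H_A`), then conjugation by `U` carries logical operators to
logical operators and symmetric local decompositions to symmetric local
decompositions with identical intermediate energies (and conversely, via
`U⁻¹`); in particular `H_A` and `H_B` have the same symmetric energy
barrier. -/
theorem symmetric_energy_barrier_is_phase_invariant
    {Q : Type*} [DecidableEq Q] [Fintype Q] (dist : Q → Q → ℕ)
    {S : Type*} (sym : S → Pauli Q)
    -- the terms of the stabilizer Hamiltonian `H_A` (mutually commuting):
    {TA : Type*} [Fintype TA] (termA : TA → Pauli Q)
    (hAcomm : ∀ t t' : TA, omega (termA t) (termA t') = 0)
    -- the ancilla qubits, their single-site terms, and disjointness from `H_A`: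
    {Anc : Type*} [Fintype Anc] (ancQ : Anc → Q) (hancInj : Function.Injective ancQ)
    (hancDisj : ∀ (t : TA) (a : Anc), ancQ a ∉ (termA t).supp)
    (hancSym : ∀ (a : Anc) (s : S), omega (Pauli.Zop (ancQ a)) (sym s) = 0)
    -- the terms of the stabilizer Hamiltonian `H_B`:
    {TB : Type*} [Fintype TB] (termB : TB → Pauli Q)
    -- the constant-depth local Clifford unitary `U`, commuting with the
    -- symmetry, with depth constant `c`:
    (U : CliffordAut Q) (c : ℕ)
    (hUloc : ∀ (r : ℕ) (P : Pauli Q), IsLocal dist r P → IsLocal dist (r + c) (U.toEquiv P))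
    (hUlocInv : ∀ (r : ℕ) (P : Pauli Q), IsLocal dist r P → IsLocal dist (r + c) (U.toEquiv.symm P))
    (hUsym : ∀ s : S, U.toEquiv (sym s) = sym s)
    -- `H_B = U (H_A + H_anc) U†`:
    (eqv : TB ≃ TA ⊕ Anc)
    (hB : ∀ t : TB, termB t =
      U.toEquiv (Sum.elim termA (fun a => Pauli.Zop (ancQ a)) (eqv t))) :
    -- conjugation preserves energies, logical operators and symmetric local
    -- decompositions (in both directions) ...
    (∀ P : Pauli Q,
      energyOf termB (U.toEquiv P)
        = energyOf (Sum.elim termA fun a => Pauli.Zop (ancQ a)) P) ∧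
    (∀ lbar : Pauli Q,
      IsLogicalOf (Sum.elim termA fun a => Pauli.Zop (ancQ a)) lbar ↔
        IsLogicalOf termB (U.toEquiv lbar)) ∧
    (∀ (r : ℕ) (lbar : Pauli Q) (L : List (Pauli Q)),
      IsSymLocalDecomp dist sym r lbar L →
        IsSymLocalDecomp dist sym (r + c) (U.toEquiv lbar) (L.map U.toEquiv)) ∧
    (∀ (r : ℕ) (lbar : Pauli Q) (L : List (Pauli Q)),
      IsSymLocalDecomp dist sym r lbar L →
        IsSymLocalDecomp dist sym (r + c) (U.toEquiv.symm lbar) (L.map U.toEquiv.symm)) ∧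
    -- ... hence `H_A` (with its decoupled ancillas) and `H_B` have the same
    -- symmetric energy barrier:
    symBarrierOf dist sym (Sum.elim termA fun a => Pauli.Zop (ancQ a))
      = symBarrierOf dist sym termB :=
  symmetric_energy_barrier_is_phase_invariant_general dist sym termA ancQ termB U c hUloc hUlocInv
    hUsym eqv hB
end

section
/- For the 2D color code, let M be any subset of faces of the 2-colex (a codimension-0 submanifold with boundary, disjoint from any boundary of the 2-colex). Then for each α ∈ {X, Z} and any two distinct colors u, v, the product ∏_{f⊂M, K(f)=u} G^α_f · ∏_{f⊂M, K(f)=v} G^α_f equals an operator h_{∂M} that is a product of single-qubit α operators supported only on vertices lying on the boundary of M (vertices belonging both to a face in M and to a face not in M). Consequently the total parity of u- and v-colored flipped plaquettes inside M equals the eigenvalue of the boundary operator h_{∂M}: N_u + N_v = ⟨h_{∂M}⟩ (mod 2). -/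
/-- A (closed) 2-colex: a 3-valent cellulation of a closed 2-dimensional
surface whose faces are 3-colorable, so that each vertex belongs to exactly
one face of each of the three colors.  A qubit lives on each vertex. -/
structure TwoColex where
  /-- vertices (qubits) -/
  V : Type
  [deqV : DecidableEq V] [finV : Fintype V]
  /-- faces -/
  Fc : Type
  [deqF : DecidableEq Fc] [finF : Fintype Fc]
  /-- the color of a face (`A`, `B`, `C`) -/
  color : Fc → Fin 3
  /-- the vertices of a face -/
  verts : Fc → Finset V
  /-- each vertex belongs to exactly one face of each color -/
  vertex_face : ∀ (v : V) (c : Fin 3), ∃! f : Fc, color f = c ∧ v ∈ verts f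

attribute [instance] TwoColex.deqV TwoColex.finV TwoColex.deqF TwoColex.finF

namespace TwoColex

variable (M : TwoColex)

/-- The face operator `G^X_f = ∏_{v ∈ f} X_v`. -/
def GX (f : M.Fc) : Pauli M.V := Pauli.XOn (M.verts f)

/-- The face operator `G^Z_f = ∏_{v ∈ f} Z_v`. -/
def GZ (f : M.Fc) : Pauli M.V := Pauli.ZOn (M.verts f)

/-- The number of flipped `X`-type plaquettes of color `u` in the excited
state created by the Pauli error `P` (a plaquette is flipped iff its face
operator anticommutes with `P`). -/
def NX (u : Fin 3) (P : Pauli M.V) : ℕ :=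
  (Finset.univ.filter fun f : M.Fc => M.color f = u ∧ Pauli.omega (M.GX f) P = 1).card

/-- The number of flipped `Z`-type plaquettes of color `u` in the excited
state created by the Pauli error `P`. -/
def NZ (u : Fin 3) (P : Pauli M.V) : ℕ :=
  (Finset.univ.filter fun f : M.Fc => M.color f = u ∧ Pauli.omega (M.GZ f) P = 1).card

end TwoColex

namespace TwoColex

variable (M : TwoColex)

/-- The boundary vertices of a region `R` of faces: vertices belonging both to
a face in `R` and to a face not in `R`. -/
def bdryVerts (R : Finset M.Fc) : Finset M.V :=
  Finset.univ.filter fun w =>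
    (∃ f ∈ R, w ∈ M.verts f) ∧ (∃ f : M.Fc, f ∉ R ∧ w ∈ M.verts f)

/-- The number of flipped `X`-type plaquettes of color `u` inside the region
`R`, in the excited state created by the Pauli error `P`. -/
def NXin (R : Finset M.Fc) (u : Fin 3) (P : Pauli M.V) : ℕ :=
  (R.filter fun f => M.color f = u ∧ Pauli.omega (M.GX f) P = 1).card

/-- The number of flipped `Z`-type plaquettes of color `u` inside the region
`R`. -/
def NZin (R : Finset M.Fc) (u : Fin 3) (P : Pauli M.V) : ℕ :=
  (R.filter fun f => M.color f = u ∧ Pauli.omega (M.GZ f) P = 1).card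

end TwoColex

/-!
Faces of one color are vertex-disjoint, so the product of the `c`-colored face operators of `R`
is `α` on every vertex those faces cover. Hence the two-color product is `α` on the symmetric
difference of the sets covered by the `u`- and the `v`-faces of `R`. A vertex covered by a `u`-face of `R` but by no `v`-face of `R` has its unique `v`-face
outside `R`, so it lies on the boundary. The parity statement is the additivity of the
symplectic form in its first argument, read modulo 2.
-/

open Finset

theorem Finset.natCast_card_symmDiff_zmod_two {Q : Type*} [DecidableEq Q] (A B : Finset Q) :
    (#(symmDiff A B) : ZMod 2) = #A + #B := by
  have key : #(symmDiff A B) + 2 * #(A ∩ B) = #A + #B := by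
    have h1 := card_sdiff_add_card_eq_card (inter_subset_union (s := A) (t := B))
    have h2 := card_union_add_card_inter A B
    rw [symmDiff_eq_sup_sdiff_inf, sup_eq_union, inf_eq_inter]
    omega
  have := congrArg (Nat.cast : ℕ → ZMod 2) key
  push_cast at this
  rwa [show (2 : ZMod 2) = 0 from rfl, zero_mul, add_zero] at this

theorem Finset.sum_zmod_two_eq_card_filter {I : Type*} (S : Finset I) (g : I → ZMod 2) :
    ∑ i ∈ S, g i = #{i ∈ S | g i = 1} := by
  rw [natCast_card_filter]
  exact sum_congr rfl fun i _ => by generalize g i = x; revert x; decide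

theorem Finset.prod_biUnion_of_map_symmDiff {Q I M : Type*} [DecidableEq Q] [DecidableEq I]
    [CommMonoid M] (F : Finset Q → M) (h_empty : F ∅ = 1)
    (h_symmDiff : ∀ A B, F A * F B = F (symmDiff A B))
    (S : Finset I) (s : I → Finset Q) (hs : (S : Set I).PairwiseDisjoint s) :
    ∏ i ∈ S, F (s i) = F (S.biUnion s) := by
  induction S using Finset.induction_on with
  | empty => simpa using h_empty.symm
  | insert i S hi ih =>
    rw [coe_insert, Set.pairwiseDisjoint_insert] at hs
    have hdisj : Disjoint (s i) (S.biUnion s) :=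
      (disjoint_biUnion_right _ _ _).2 fun j hj => hs.2 j hj fun hij => hi (hij ▸ hj)
    rw [prod_insert hi, ih hs.1, h_symmDiff, hdisj.symmDiff_eq_sup, biUnion_insert, sup_eq_union]

namespace Pauli

variable {Q : Type*} [DecidableEq Q]

theorem XOn_mul_XOn (A B : Finset Q) : XOn A * XOn B = XOn (symmDiff A B) := by
  simp [XOn, mul_def]

theorem ZOn_mul_ZOn (A B : Finset Q) : ZOn A * ZOn B = ZOn (symmDiff A B) := by
  simp [ZOn, mul_def]

theorem prod_XOn_of_pairwiseDisjoint {I : Type*} [DecidableEq I] (S : Finset I)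
    (s : I → Finset Q) (hs : (S : Set I).PairwiseDisjoint s) :
    ∏ i ∈ S, XOn (s i) = XOn (S.biUnion s) :=
  prod_biUnion_of_map_symmDiff XOn rfl XOn_mul_XOn S s hs

theorem prod_ZOn_of_pairwiseDisjoint {I : Type*} [DecidableEq I] (S : Finset I)
    (s : I → Finset Q) (hs : (S : Set I).PairwiseDisjoint s) :
    ∏ i ∈ S, ZOn (s i) = ZOn (S.biUnion s) :=
  prod_biUnion_of_map_symmDiff ZOn rfl ZOn_mul_ZOn S s hs

theorem omega_mul_left (a b P : Pauli Q) : omega (a * b) P = omega a P + omega b P := by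
  simp only [omega, mul_def]
  rw [← inf_eq_inter, ← inf_eq_inter, inf_symmDiff_distrib_right, inf_symmDiff_distrib_left]
  simp only [inf_eq_inter, natCast_card_symmDiff_zmod_two]
  ring

theorem omega_prod_left {I : Type*} (S : Finset I) (g : I → Pauli Q) (P : Pauli Q) :
    omega (∏ i ∈ S, g i) P = ∑ i ∈ S, omega (g i) P := by
  induction S using Finset.cons_induction with
  | empty => simp [omega, one_def]
  | cons i S hi ih => rw [prod_cons, sum_cons, omega_mul_left, ih]

theorem omega_prod_left_eq_card_filter {I : Type*} (S : Finset I) (g : I → Pauli Q)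
    (P : Pauli Q) : omega (∏ i ∈ S, g i) P = #{i ∈ S | omega (g i) P = 1} := by
  rw [omega_prod_left, sum_zmod_two_eq_card_filter]

end Pauli

namespace TwoColex

section

variable (M : TwoColex) (R : Finset M.Fc)

theorem disjoint_verts_of_color_eq {f g : M.Fc} (hfg : f ≠ g) (hc : M.color f = M.color g) :
    Disjoint (M.verts f) (M.verts g) :=
  disjoint_left.2 fun _ hxf hxg =>
    hfg ((M.vertex_face _ (M.color g)).unique ⟨hc, hxf⟩ ⟨rfl, hxg⟩)

theorem pairwiseDisjoint_verts_filter_color (c : Fin 3) :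
    (↑(R.filter fun f => M.color f = c) : Set M.Fc).PairwiseDisjoint M.verts := by
  intro f hf g hg hfg
  rw [mem_coe, mem_filter] at hf hg
  exact M.disjoint_verts_of_color_eq hfg (hf.2.trans hg.2.symm)

def colorSupport (c : Fin 3) : Finset M.V :=
  (R.filter fun f => M.color f = c).biUnion M.verts

theorem mem_colorSupport {c : Fin 3} {x : M.V} :
    x ∈ M.colorSupport R c ↔ ∃ f ∈ R, M.color f = c ∧ x ∈ M.verts f := by
  simp [colorSupport, and_assoc]

theorem prod_GX_filter_color (c : Fin 3) :
    ∏ f ∈ R.filter (fun f => M.color f = c), M.GX f = Pauli.XOn (M.colorSupport R c) :=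
  Pauli.prod_XOn_of_pairwiseDisjoint _ _ (M.pairwiseDisjoint_verts_filter_color R c)

theorem prod_GZ_filter_color (c : Fin 3) :
    ∏ f ∈ R.filter (fun f => M.color f = c), M.GZ f = Pauli.ZOn (M.colorSupport R c) :=
  Pauli.prod_ZOn_of_pairwiseDisjoint _ _ (M.pairwiseDisjoint_verts_filter_color R c)

theorem sdiff_colorSupport_subset_bdryVerts (u v : Fin 3) :
    M.colorSupport R u \ M.colorSupport R v ⊆ M.bdryVerts R := by
  intro x hx
  obtain ⟨hxu, hxv⟩ := mem_sdiff.1 hx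
  obtain ⟨f, hfR, -, hxf⟩ := (M.mem_colorSupport R).1 hxu
  obtain ⟨g, ⟨hg, hxg⟩, -⟩ := M.vertex_face x v
  have hgR : g ∉ R := fun hgR => hxv ((M.mem_colorSupport R).2 ⟨g, hgR, hg, hxg⟩)
  simp only [bdryVerts, mem_filter, mem_univ, true_and]
  exact ⟨⟨f, hfR, hxf⟩, g, hgR, hxg⟩

theorem symmDiff_colorSupport_subset_bdryVerts (u v : Fin 3) :
    symmDiff (M.colorSupport R u) (M.colorSupport R v) ⊆ M.bdryVerts R := by
  rw [symmDiff_def, sup_eq_union]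
  exact union_subset (M.sdiff_colorSupport_subset_bdryVerts R u v)
    (M.sdiff_colorSupport_subset_bdryVerts R v u)

theorem natCast_NXin (u : Fin 3) (P : Pauli M.V) :
    (M.NXin R u P : ZMod 2) = Pauli.omega (∏ f ∈ R.filter fun f => M.color f = u, M.GX f) P := by
  rw [Pauli.omega_prod_left_eq_card_filter, NXin, filter_filter]

theorem natCast_NZin (u : Fin 3) (P : Pauli M.V) :
    (M.NZin R u P : ZMod 2) = Pauli.omega (∏ f ∈ R.filter fun f => M.color f = u, M.GZ f) P := by
  rw [Pauli.omega_prod_left_eq_card_filter, NZin, filter_filter]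

end

theorem color_code_gauss_law_general (M : TwoColex) (R : Finset M.Fc)
    (u v : Fin 3) :
    -- the X-type two-color product over `R` is a product of single-qubit X
    -- operators supported on the boundary of `R` ...
    ((∏ f ∈ R.filter fun f => M.color f = u, M.GX f) *
        (∏ f ∈ R.filter fun f => M.color f = v, M.GX f)).Z = ∅ ∧
    ((∏ f ∈ R.filter fun f => M.color f = u, M.GX f) *
        (∏ f ∈ R.filter fun f => M.color f = v, M.GX f)).X ⊆ M.bdryVerts R ∧
    -- ... and its eigenvalue in the excited state created by any error `P`
    -- measures the enclosed charge: `N_u + N_v = ⟨h_∂R⟩ (mod 2)`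
    (∀ P : Pauli M.V,
      ((M.NXin R u P : ZMod 2) + (M.NXin R v P : ZMod 2)) =
        Pauli.omega
          ((∏ f ∈ R.filter fun f => M.color f = u, M.GX f) *
            (∏ f ∈ R.filter fun f => M.color f = v, M.GX f)) P) ∧
    -- the Z-type statements:
    ((∏ f ∈ R.filter fun f => M.color f = u, M.GZ f) *
        (∏ f ∈ R.filter fun f => M.color f = v, M.GZ f)).X = ∅ ∧
    ((∏ f ∈ R.filter fun f => M.color f = u, M.GZ f) *
        (∏ f ∈ R.filter fun f => M.color f = v, M.GZ f)).Z ⊆ M.bdryVerts R ∧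
    (∀ P : Pauli M.V,
      ((M.NZin R u P : ZMod 2) + (M.NZin R v P : ZMod 2)) =
        Pauli.omega
          ((∏ f ∈ R.filter fun f => M.color f = u, M.GZ f) *
            (∏ f ∈ R.filter fun f => M.color f = v, M.GZ f)) P) := by
  refine ⟨?_, ?_, fun P => ?_, ?_, ?_, fun P => ?_⟩
  · rw [prod_GX_filter_color, prod_GX_filter_color, Pauli.XOn_mul_XOn]
    rfl
  · rw [prod_GX_filter_color, prod_GX_filter_color, Pauli.XOn_mul_XOn]
    exact M.symmDiff_colorSupport_subset_bdryVerts R u v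
  · rw [Pauli.omega_mul_left, natCast_NXin, natCast_NXin]
  · rw [prod_GZ_filter_color, prod_GZ_filter_color, Pauli.ZOn_mul_ZOn]
    rfl
  · rw [prod_GZ_filter_color, prod_GZ_filter_color, Pauli.ZOn_mul_ZOn]
    exact M.symmDiff_colorSupport_subset_bdryVerts R u v
  · rw [Pauli.omega_mul_left, natCast_NZin, natCast_NZin]

/-- The emergent 0-form symmetry of the 2D color code as a
Gauss law: the two-color product of face operators over a region `R` is an
operator supported on the boundary of `R`, whose eigenvalue measures the
parity of the enclosed topological charge. -/
theorem color_code_gauss_law (M : TwoColex) (R : Finset M.Fc)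
    (u v : Fin 3) (huv : u ≠ v) :
    -- the X-type two-color product over `R` is a product of single-qubit X
    -- operators supported on the boundary of `R` ...
    ((∏ f ∈ R.filter fun f => M.color f = u, M.GX f) *
        (∏ f ∈ R.filter fun f => M.color f = v, M.GX f)).Z = ∅ ∧
    ((∏ f ∈ R.filter fun f => M.color f = u, M.GX f) *
        (∏ f ∈ R.filter fun f => M.color f = v, M.GX f)).X ⊆ M.bdryVerts R ∧
    -- ... and its eigenvalue in the excited state created by any error `P`
    -- measures the enclosed charge: `N_u + N_v = ⟨h_∂R⟩ (mod 2)`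
    (∀ P : Pauli M.V,
      ((M.NXin R u P : ZMod 2) + (M.NXin R v P : ZMod 2)) =
        Pauli.omega
          ((∏ f ∈ R.filter fun f => M.color f = u, M.GX f) *
            (∏ f ∈ R.filter fun f => M.color f = v, M.GX f)) P) ∧
    -- the Z-type statements:
    ((∏ f ∈ R.filter fun f => M.color f = u, M.GZ f) *
        (∏ f ∈ R.filter fun f => M.color f = v, M.GZ f)).X = ∅ ∧
    ((∏ f ∈ R.filter fun f => M.color f = u, M.GZ f) *
        (∏ f ∈ R.filter fun f => M.color f = v, M.GZ f)).Z ⊆ M.bdryVerts R ∧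
    (∀ P : Pauli M.V,
      ((M.NZin R u P : ZMod 2) + (M.NZin R v P : ZMod 2)) =
        Pauli.omega
          ((∏ f ∈ R.filter fun f => M.color f = u, M.GZ f) *
            (∏ f ∈ R.filter fun f => M.color f = v, M.GZ f)) P) :=
  color_code_gauss_law_general M R u v

end TwoColex
end

section
/- Color flux conservation: in the commuting gauge color code model H_{G_b}, any excitation (set of flipped terms of G_b) reachable from the ground space while preserving the Z_2×Z_2 1-form symmetry S (i.e., keeping all stabilizers S^X_q, S^Z_q at eigenvalue +1) must have, for every 3-cell q, an even number of flipped plaquettes on the boundary of q; equivalently, on the dual lattice the flipped plaquettes form closed flux strings in which the number of strings carrying each single color entering any vertex is even, so symmetric bulk excitations are closed color-flux-conserving loops (terminating only on boundary facets of matching color). -/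
/-- A 3-colex: a cellulation of a 3-manifold in which every vertex is 4-valent
and the 3-cells are 4-colorable with colors `r, g, b, y` (encoded as
`0, 1, 2, 3 : Fin 4`); each face carries the color pair complementary to the
colors of its two adjacent 3-cells.  A qubit lives on each vertex. -/
structure ThreeColex where
  /-- vertices (qubits) -/
  V : Type
  [deqV : DecidableEq V] [finV : Fintype V]
  /-- 3-cells -/
  Cell : Type
  [deqC : DecidableEq Cell] [finC : Fintype Cell]
  /-- faces -/
  Fc : Type
  [deqF : DecidableEq Fc] [finF : Fintype Fc]
  /-- the color of a 3-cell -/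
  cellColor : Cell → Fin 4
  /-- the color pair of a face -/
  faceColor : Fc → Finset (Fin 4)
  faceColor_card : ∀ f, (faceColor f).card = 2
  /-- the vertices of a face -/
  vertsF : Fc → Finset V
  /-- the vertices of a 3-cell -/
  vertsC : Cell → Finset V
  /-- the faces on the boundary of a 3-cell -/
  facesC : Cell → Finset Fc
  /-- the color pair of a face of a cell avoids the color of the cell -/
  face_cell_color : ∀ c, ∀ f ∈ facesC c, cellColor c ∉ faceColor f
  /-- the faces of a cell consist of vertices of the cell -/
  face_verts_sub : ∀ c, ∀ f ∈ facesC c, vertsF f ⊆ vertsC c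
  /-- each vertex of a cell lies on exactly one boundary face of the cell of
  each color pair avoiding the cell color -/
  vertex_unique_face : ∀ (c : Cell) (p : Finset (Fin 4)), p.card = 2 →
    cellColor c ∉ p → ∀ v ∈ vertsC c,
      ∃! f : Fc, f ∈ facesC c ∧ faceColor f = p ∧ v ∈ vertsF f

attribute [instance] ThreeColex.deqV ThreeColex.finV ThreeColex.deqC
  ThreeColex.finC ThreeColex.deqF ThreeColex.finF

namespace ThreeColex

variable (M : ThreeColex)

/-- The gauge generator `G^X_f = ∏_{v ∈ f} X_v`. -/
def GX (f : M.Fc) : Pauli M.V := Pauli.XOn (M.vertsF f)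

/-- The gauge generator `G^Z_f = ∏_{v ∈ f} Z_v`. -/
def GZ (f : M.Fc) : Pauli M.V := Pauli.ZOn (M.vertsF f)

/-- The stabilizer `S^X_q = ∏_{v ∈ q} X_v`. -/
def SX (q : M.Cell) : Pauli M.V := Pauli.XOn (M.vertsC q)

/-- The stabilizer `S^Z_q = ∏_{v ∈ q} Z_v`. -/
def SZ (q : M.Cell) : Pauli M.V := Pauli.ZOn (M.vertsC q)

/-- The blue color `b`. -/
def blue : Fin 4 := 2

/-- A face belongs to the blue-sector gauge set `G_b` iff its color pair does
not contain `b`, i.e. `K(f) ∈ {gr, gy, ry}`. -/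
def inGb (f : M.Fc) : Prop := blue ∉ M.faceColor f

instance (f : M.Fc) : Decidable (M.inGb f) := by unfold inGb; infer_instance

/-- The color pair `uv` prescribed for a cell of color `k ≠ b`:
`gy` if `k = r`, `ry` if `k = g`, `rg` if `k = y`. -/
def pairFor (k : Fin 4) : Finset (Fin 4) := ({0, 1, 3} : Finset (Fin 4)) \ {k}

/-- The three color pairs `{gy, ry, rg}` occurring in `G_b`. -/
def gbPairs : Finset (Finset (Fin 4)) :=
  {({1, 3} : Finset (Fin 4)), ({0, 3} : Finset (Fin 4)), ({0, 1} : Finset (Fin 4))}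

end ThreeColex

namespace ThreeColex

open Finset

lemma even_iff_castZMod2 (n : ℕ) : Even n ↔ (n : ZMod 2) = 0 := by
  rw [ZMod.natCast_eq_zero_iff, Nat.dvd_iff_mod_eq_zero, Nat.even_iff]

lemma zmod2_ne_zero {x : ZMod 2} (h : x ≠ 0) : x = 1 := by revert h; revert x; decide

/-- Casting the number of `ω = 1` elements to `ZMod 2` gives the sum of `ω`. -/
lemma card_filter_cast {α : Type*} (F : Finset α) (ω : α → ZMod 2) :
    (((F.filter fun f => ω f = 1).card : ZMod 2)) = ∑ f ∈ F, ω f := by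
  classical
  rw [← Finset.sum_filter_of_ne (p := fun f => ω f = 1)
      (fun x _ hx => zmod2_ne_zero hx)]
  rw [Finset.sum_congr rfl (fun x hx => (Finset.mem_filter.mp hx).2)]
  simp

/-- Double counting: each vertex of a cell lies on exactly one boundary face
of each admissible color pair. -/
lemma count_lemma (M : ThreeColex) (q : M.Cell) (p : Finset (Fin 4))
    (hp : p.card = 2) (hc : M.cellColor q ∉ p) (S : Finset M.V) :
    ∑ f ∈ (M.facesC q).filter (fun f => M.faceColor f = p),
      (M.vertsF f ∩ S).card = (M.vertsC q ∩ S).card := by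
  classical
  have hsub : ∀ f ∈ (M.facesC q).filter (fun f => M.faceColor f = p),
      M.vertsF f ∩ S = (M.vertsC q ∩ S).filter (· ∈ M.vertsF f) := by
    intro f hf
    obtain ⟨hf1, _⟩ := Finset.mem_filter.mp hf
    ext v
    simp only [Finset.mem_inter, Finset.mem_filter]
    constructor
    · rintro ⟨hv1, hv2⟩; exact ⟨⟨M.face_verts_sub q f hf1 hv1, hv2⟩, hv1⟩
    · rintro ⟨⟨_, hv2⟩, hv3⟩; exact ⟨hv3, hv2⟩
  calc ∑ f ∈ (M.facesC q).filter (fun f => M.faceColor f = p), (M.vertsF f ∩ S).card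
      = ∑ f ∈ (M.facesC q).filter (fun f => M.faceColor f = p),
          ∑ v ∈ M.vertsC q ∩ S, (if v ∈ M.vertsF f then 1 else 0) := by
        refine Finset.sum_congr rfl fun f hf => ?_
        rw [hsub f hf, Finset.card_filter]
    _ = ∑ v ∈ M.vertsC q ∩ S,
          ∑ f ∈ (M.facesC q).filter (fun f => M.faceColor f = p),
            (if v ∈ M.vertsF f then 1 else 0) := Finset.sum_comm
    _ = ∑ v ∈ M.vertsC q ∩ S, 1 := by
        refine Finset.sum_congr rfl fun v hv => ?_
        rw [← Finset.card_filter]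
        obtain ⟨f, ⟨hf1, hf2, hf3⟩, huniq⟩ :=
          M.vertex_unique_face q p hp hc v (Finset.mem_inter.mp hv).1
        rw [Finset.card_eq_one]
        refine ⟨f, ?_⟩
        ext g
        simp only [Finset.mem_filter, Finset.mem_singleton]
        constructor
        · rintro ⟨⟨hg1, hg3⟩, hg2⟩
          exact huniq g ⟨hg1, hg3, hg2⟩
        · rintro rfl
          exact ⟨⟨hf1, hf2⟩, hf3⟩
    _ = (M.vertsC q ∩ S).card := by simp

/-- Key parity lemma for a single color pair. -/
lemma key_parity (M : ThreeColex) (q : M.Cell) (p : Finset (Fin 4))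
    (hp : p.card = 2) (S : Finset M.V)
    (hS : (((M.vertsC q ∩ S).card : ZMod 2)) = 0) :
    Even (((M.facesC q).filter fun f =>
      M.faceColor f = p ∧ ((M.vertsF f ∩ S).card : ZMod 2) = 1).card) := by
  classical
  by_cases hc : M.cellColor q ∈ p
  · have : ((M.facesC q).filter fun f =>
        M.faceColor f = p ∧ ((M.vertsF f ∩ S).card : ZMod 2) = 1) = ∅ := by
      rw [Finset.filter_eq_empty_iff]
      rintro f hf ⟨h1, _⟩
      exact M.face_cell_color q f hf (h1 ▸ hc)
    rw [this]
    simp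
  · rw [even_iff_castZMod2]
    have : ((M.facesC q).filter fun f =>
        M.faceColor f = p ∧ ((M.vertsF f ∩ S).card : ZMod 2) = 1)
        = ((M.facesC q).filter fun f => M.faceColor f = p).filter
            (fun f => ((M.vertsF f ∩ S).card : ZMod 2) = 1) := by
      rw [Finset.filter_filter]
    rw [this, card_filter_cast, ← Nat.cast_sum, count_lemma M q p hp hc S, hS]

lemma mem_gbPairs_iff (s : Finset (Fin 4)) (hs : s.card = 2) :
    (2 : Fin 4) ∉ s ↔ s ∈ gbPairs := by
  revert hs
  revert s
  decide

/-- The `inGb` filter splits as a disjoint union over the three pairs. -/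
lemma inGb_filter_even (M : ThreeColex) (q : M.Cell) (ω : M.Fc → Prop)
    [DecidablePred ω]
    (h : ∀ p ∈ gbPairs,
      Even (((M.facesC q).filter fun f => M.faceColor f = p ∧ ω f).card)) :
    Even (((M.facesC q).filter fun f => M.inGb f ∧ ω f).card) := by
  classical
  have heq : ((M.facesC q).filter fun f => M.inGb f ∧ ω f)
      = gbPairs.biUnion (fun p => (M.facesC q).filter
          fun f => M.faceColor f = p ∧ ω f) := by
    ext f
    simp only [Finset.mem_biUnion, Finset.mem_filter]
    constructor
    · rintro ⟨hf, hgb, hω⟩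
      exact ⟨M.faceColor f, (mem_gbPairs_iff _ (M.faceColor_card f)).mp hgb,
        hf, rfl, hω⟩
    · rintro ⟨p, hp, hf, rfl, hω⟩
      exact ⟨hf, (mem_gbPairs_iff _ (M.faceColor_card f)).mpr hp, hω⟩
  rw [heq, Finset.card_biUnion]
  · rw [even_iff_castZMod2, Nat.cast_sum]
    refine Finset.sum_eq_zero fun p hp => ?_
    rw [← even_iff_castZMod2]
    exact h p hp
  · intro p hp p' hp' hne
    simp only [Finset.disjoint_left, Finset.mem_filter]
    rintro f ⟨_, h1, _⟩ ⟨_, h2, _⟩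
    exact hne (h1.symm.trans h2)

lemma omega_GX (M : ThreeColex) (f : M.Fc) (P : Pauli M.V) :
    Pauli.omega (M.GX f) P = ((M.vertsF f ∩ P.Z).card : ZMod 2) := by
  simp [Pauli.omega, GX, Pauli.XOn]

lemma omega_GZ (M : ThreeColex) (f : M.Fc) (P : Pauli M.V) :
    Pauli.omega (M.GZ f) P = ((M.vertsF f ∩ P.X).card : ZMod 2) := by
  simp [Pauli.omega, GZ, Pauli.ZOn, Finset.inter_comm]

lemma omega_SX (M : ThreeColex) (q : M.Cell) (P : Pauli M.V) :
    Pauli.omega (M.SX q) P = ((M.vertsC q ∩ P.Z).card : ZMod 2) := by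
  simp [Pauli.omega, SX, Pauli.XOn]

lemma omega_SZ (M : ThreeColex) (q : M.Cell) (P : Pauli M.V) :
    Pauli.omega (M.SZ q) P = ((M.vertsC q ∩ P.X).card : ZMod 2) := by
  simp [Pauli.omega, SZ, Pauli.ZOn, Finset.inter_comm]

lemma gbPairs_card : ∀ p ∈ gbPairs, p.card = 2 := by decide

/-- Color flux conservation in the symmetric sector of the
commuting gauge color code model `H_{G_b}`. -/
theorem color_flux_conservation (M : ThreeColex) :
    ∀ P : Pauli M.V,
      -- if the error `P` preserves the 1-form symmetry (all stabilizers stay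
      -- at `+1`) ...
      (∀ q : M.Cell, Pauli.omega (M.SX q) P = 0 ∧ Pauli.omega (M.SZ q) P = 0) →
      ∀ q : M.Cell,
        -- ... then every 3-cell has an even number of flipped `G_b`
        -- plaquettes on its boundary, in each sector ...
        Even (((M.facesC q).filter fun f =>
          M.inGb f ∧ Pauli.omega (M.GX f) P = 1).card) ∧
        Even (((M.facesC q).filter fun f =>
          M.inGb f ∧ Pauli.omega (M.GZ f) P = 1).card) ∧
        -- ... and indeed the flux strings conserve each color pair separately
        -- at every 3-cell (vertex of the dual lattice):
        (∀ p ∈ gbPairs,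
          Even (((M.facesC q).filter fun f =>
            M.faceColor f = p ∧ Pauli.omega (M.GX f) P = 1).card) ∧
          Even (((M.facesC q).filter fun f =>
            M.faceColor f = p ∧ Pauli.omega (M.GZ f) P = 1).card)) := by
  intro P hP q
  obtain ⟨hX, hZ⟩ := hP q
  rw [omega_SX] at hX
  rw [omega_SZ] at hZ
  simp only [omega_GX, omega_GZ]
  have hpair : ∀ p ∈ gbPairs,
      Even (((M.facesC q).filter fun f =>
        M.faceColor f = p ∧ ((M.vertsF f ∩ P.Z).card : ZMod 2) = 1).card) ∧
      Even (((M.facesC q).filter fun f =>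
        M.faceColor f = p ∧ ((M.vertsF f ∩ P.X).card : ZMod 2) = 1).card) :=
    fun p hp => ⟨key_parity M q p (gbPairs_card p hp) P.Z hX,
                 key_parity M q p (gbPairs_card p hp) P.X hZ⟩
  exact ⟨inGb_filter_even M q _ (fun p hp => (hpair p hp).1),
         inGb_filter_even M q _ (fun p hp => (hpair p hp).2),
         hpair⟩

end ThreeColex
end
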